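/- arXiv:1502.01995 — 4 statements merged into one kernel-verified Lean document; each statement's English description precedes it below -/
import Mathlib

section
/- Let n be a positive natural number, μ = 2πn, and let a₀ = −inf_{z>0} (sin z)/z (so a₀ ≈ 0.217234). If A ≥ √(1 + a₀), then the function K(x) = (A² − 1)(1 − x) − sin(μx)/μ is nonnegative for all x ∈ (0,1). -/
open Real Set

theorem stmt1 (n : ℕ) (hn : 1 ≤ n) (μ : ℝ) (hμ : μ = 2 * Real.pi * n)
    (a₀ : ℝ) (ha₀ : a₀ = -sInf ((fun z => Real.sin z / z) '' Set.Ioi (0 : ℝ)))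
    (A : ℝ) (hA : Real.sqrt (1 + a₀) ≤ A) :
    ∀ x ∈ Set.Ioo (0 : ℝ) 1, 0 ≤ (A ^ 2 - 1) * (1 - x) - Real.sin (μ * x) / μ := by
  have hπ := Real.pi_pos
  have hn1 : (1 : ℝ) ≤ (n : ℝ) := by exact_mod_cast hn
  have hμpos : 0 < μ := by rw [hμ]; nlinarith
  have hbdd : BddBelow ((fun z => Real.sin z / z) '' Set.Ioi (0 : ℝ)) := by
    refine ⟨-1, ?_⟩
    rintro y ⟨z, hz, rfl⟩
    simp only [Set.mem_Ioi] at hz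
    have h1 : -z ≤ Real.sin z := by
      rcases le_or_gt 1 z with h | h
      · nlinarith [Real.neg_one_le_sin z]
      · have := Real.sin_pos_of_pos_of_lt_pi hz (by nlinarith [Real.pi_gt_three])
        nlinarith
    rw [le_div_iff₀ hz]
    nlinarith
  have hinf : ∀ z : ℝ, 0 < z → -a₀ ≤ Real.sin z / z := by
    intro z hz
    rw [ha₀, neg_neg]
    exact csInf_le hbdd ⟨z, hz, rfl⟩
  have hsle : -a₀ ≤ 1 := by
    rw [ha₀, neg_neg]
    refine le_trans (csInf_le hbdd ⟨1, by norm_num, rfl⟩) ?_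
    simpa using Real.sin_le_one 1
  have h0 : 0 ≤ 1 + a₀ := by linarith
  have hA2 : 1 + a₀ ≤ A ^ 2 := by
    calc 1 + a₀ = (Real.sqrt (1 + a₀)) ^ 2 := (Real.sq_sqrt h0).symm
    _ ≤ A ^ 2 := by
        apply pow_le_pow_left₀ (Real.sqrt_nonneg _) hA
  intro x ⟨hx0, hx1⟩
  set z := μ * (1 - x) with hzdef
  have hzpos : 0 < z := mul_pos hμpos (by linarith)
  have hsin : Real.sin z = -Real.sin (μ * x) := by
    have : z = -(μ * x) + (n : ℤ) * (2 * Real.pi) := by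
      rw [hzdef, hμ]; push_cast; ring
    rw [this, Real.sin_add_int_mul_two_pi, Real.sin_neg]
  have key : -a₀ ≤ Real.sin z / z := hinf z hzpos
  have heq : (A ^ 2 - 1) * (1 - x) - Real.sin (μ * x) / μ
      = (1 - x) * ((A ^ 2 - 1) + Real.sin z / z) := by
    rw [hzdef]
    field_simp
    have hs : Real.sin ((1 - x) * μ) = -Real.sin (x * μ) := by rw [mul_comm (1 - x), mul_comm x]; exact hsin
    nlinarith [hsin, hs]
  rw [heq]
  have h1 : 0 ≤ (A ^ 2 - 1) + Real.sin z / z := by linarith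
  exact mul_nonneg (by linarith) h1
end

section
/- For x ≥ 1 and μ = A/c with A, c > 0, the convolution of −(1/(2Ac)) sin((A/c)t) sgn(t) with the tent function Λ, evaluated at x, equals c·sin(Ax/c)·(cos(A/c) − 1)/A³. -/
open Real MeasureTheory intervalIntegral

theorem stmt12 (A c : ℝ) (hA : 0 < A) (hc : 0 < c) :
    ∀ x : ℝ, 1 ≤ x →
      (∫ t : ℝ, (-(1 / (2 * A * c)) * Real.sin ((A / c) * (x - t)) * Real.sign (x - t)) *
          max (1 - |t|) 0) =
        c * Real.sin (A * x / c) * (Real.cos (A / c) - 1) / A ^ 3 := by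
  intro x hx
  set μ : ℝ := A / c with hμdef
  set k : ℝ := 1 / (2 * A * c) with hkdef
  have hμ : μ ≠ 0 := by positivity
  -- step 1: remove sign
  have h1 : (∫ t : ℝ, (-(k) * Real.sin (μ * (x - t)) * Real.sign (x - t)) * max (1 - |t|) 0)
      = ∫ t : ℝ, (-(k) * Real.sin (μ * (x - t))) * max (1 - |t|) 0 := by
    congr 1; funext t
    rcases lt_or_ge (|t|) 1 with h | h
    · have : (0:ℝ) < x - t := by
        have := abs_lt.mp h
        linarith [this.2]
      rw [Real.sign_of_pos this, mul_one]
    · have : max (1 - |t|) 0 = 0 := max_eq_right (by linarith)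
      rw [this, mul_zero, mul_zero]
  rw [h1]
  -- step 2: restrict to Icc (-1) 1
  have h2 : (∫ t : ℝ, (-(k) * Real.sin (μ * (x - t))) * max (1 - |t|) 0)
      = ∫ t in Set.Icc (-1:ℝ) 1, (-(k) * Real.sin (μ * (x - t))) * max (1 - |t|) 0 := by
    rw [setIntegral_eq_integral_of_forall_compl_eq_zero]
    intro t ht
    have : max (1 - |t|) 0 = 0 := by
      simp only [Set.mem_Icc, not_and_or, not_le] at ht
      rcases ht with h | h
      · exact max_eq_right (by rw [abs_of_neg (by linarith)]; linarith)
      · exact max_eq_right (by rw [abs_of_pos (by linarith)]; linarith)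
    rw [this, mul_zero]
  rw [h2, MeasureTheory.integral_Icc_eq_integral_Ioc,
    ← intervalIntegral.integral_of_le (by norm_num : (-1:ℝ) ≤ 1)]
  have hcont : Continuous fun t : ℝ => (-(k) * Real.sin (μ * (x - t))) * max (1 - |t|) 0 := by
    fun_prop
  -- split
  rw [← intervalIntegral.integral_add_adjacent_intervals (a := (-1:ℝ)) (b := 0) (c := 1)
    (hcont.intervalIntegrable _ _) (hcont.intervalIntegrable _ _)]
  -- left piece: on [-1,0], max = 1 + t
  have hL : (∫ t in (-1:ℝ)..0, (-(k) * Real.sin (μ * (x - t))) * max (1 - |t|) 0)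
      = ∫ t in (-1:ℝ)..0, (-(k) * Real.sin (μ * (x - t))) * (1 + t) := by
    apply intervalIntegral.integral_congr
    intro t ht
    rw [Set.uIcc_of_le (by norm_num : (-1:ℝ) ≤ 0)] at ht
    obtain ⟨h1', h2'⟩ := ht
    dsimp only
    have : |t| = -t := abs_of_nonpos h2'
    rw [this, max_eq_left (by linarith)]
    ring_nf
  have hR : (∫ t in (0:ℝ)..1, (-(k) * Real.sin (μ * (x - t))) * max (1 - |t|) 0)
      = ∫ t in (0:ℝ)..1, (-(k) * Real.sin (μ * (x - t))) * (1 - t) := by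
    apply intervalIntegral.integral_congr
    intro t ht
    rw [Set.uIcc_of_le (by norm_num : (0:ℝ) ≤ 1)] at ht
    obtain ⟨h1', h2'⟩ := ht
    dsimp only
    rw [abs_of_nonneg h1', max_eq_left (by linarith)]
  rw [hL, hR]
  -- derivative facts
  have hinner : ∀ t : ℝ, HasDerivAt (fun t => μ * (x - t)) (-μ) t := by
    intro t
    have := ((hasDerivAt_id t).const_sub x).const_mul μ
    simpa using this
  have hcos : ∀ t : ℝ, HasDerivAt (fun t => Real.cos (μ * (x - t))) (μ * Real.sin (μ * (x - t))) t := by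
    intro t
    have := (Real.hasDerivAt_cos (μ * (x - t))).comp t (hinner t)
    exact this.congr_deriv (by ring)
  have hsin : ∀ t : ℝ, HasDerivAt (fun t => Real.sin (μ * (x - t))) (-μ * Real.cos (μ * (x - t))) t := by
    intro t
    have := (Real.hasDerivAt_sin (μ * (x - t))).comp t (hinner t)
    exact this.congr_deriv (by ring)
  -- right integral
  have hFR : ∀ t : ℝ, HasDerivAt
      (fun t => -(k) * ((1 - t) * Real.cos (μ * (x - t)) / μ - Real.sin (μ * (x - t)) / μ ^ 2))
      ((-(k) * Real.sin (μ * (x - t))) * (1 - t)) t := by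
    intro t
    have h := ((((hasDerivAt_id t).const_sub 1).mul (hcos t)).div_const μ |>.sub
      ((hsin t).div_const (μ ^ 2))).const_mul (-(k))
    refine h.congr_deriv ?_
    simp only [id]
    field_simp
    ring
  have hFL : ∀ t : ℝ, HasDerivAt
      (fun t => -(k) * ((1 + t) * Real.cos (μ * (x - t)) / μ + Real.sin (μ * (x - t)) / μ ^ 2))
      ((-(k) * Real.sin (μ * (x - t))) * (1 + t)) t := by
    intro t
    have h := ((((hasDerivAt_id t).const_add 1).mul (hcos t)).div_const μ |>.add
      ((hsin t).div_const (μ ^ 2))).const_mul (-(k))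
    refine h.congr_deriv ?_
    simp only [id]
    field_simp
    ring
  have hcL : Continuous fun t : ℝ => (-(k) * Real.sin (μ * (x - t))) * (1 + t) := by fun_prop
  have hcR : Continuous fun t : ℝ => (-(k) * Real.sin (μ * (x - t))) * (1 - t) := by fun_prop
  rw [intervalIntegral.integral_eq_sub_of_hasDerivAt (fun t _ => hFL t)
      (hcL.intervalIntegrable _ _),
    intervalIntegral.integral_eq_sub_of_hasDerivAt (fun t _ => hFR t)
      (hcR.intervalIntegrable _ _)]
  have e1 : μ * (x - 1) = μ * x - μ := by ring
  have e2 : μ * (x - (-1)) = μ * x + μ := by ring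
  have e3 : μ * (x - 0) = μ * x := by ring
  have e4 : A * x / c = μ * x := by rw [hμdef]; ring
  rw [e1, e2, e3, e4, Real.sin_sub, Real.sin_add]
  have hAc : A = μ * c := by rw [hμdef]; field_simp
  rw [hkdef, hAc]
  field_simp
  ring
end

section
/- Let q ∈ (1,2) and K ∈ L^{q/(2q−2)}(ℝ) with K supported in (−1,1). Suppose (z_k) is a sequence in L^q(ℝ) with ‖z_k‖_{L^q} = 1 such that for some fixed ε > 0 and all k, sup_y ∫_{y−10}^{y+10} |z_k(x)|^q dx < ε^q. Then ⟨K * z_k, z_k⟩ ≤ C ε^{2−q} for a constant C depending only on K and q. -/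
open Real MeasureTheory Set
open ENNReal NNReal

lemma young_tri {φ α β : ℝ → ℝ≥0∞} (hφ : Measurable φ) (hα : Measurable α) (hβ : Measurable β)
    {q : ℝ} (hq1 : 1 < q) (hq2 : q < 2) :
    ∫⁻ x, (∫⁻ y, φ (x - y) * α y) * β x ≤
      (∫⁻ x, φ x ^ (q / (2 * q - 2))) ^ ((2 * q - 2) / q) * (∫⁻ x, α x ^ q) ^ (1 / q) *
        (∫⁻ x, β x ^ q) ^ (1 / q) := by
  set r : ℝ := q / (2 * q - 2) with hrdef
  have hq0 : (0:ℝ) < q := by linarith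
  have h2q2 : (0:ℝ) < 2 * q - 2 := by linarith
  have hr0 : (0:ℝ) < r := div_pos hq0 h2q2
  set p1 : ℝ := (q - 1) / q with hp1def
  set p3 : ℝ := (2 - q) / q with hp3def
  have hp1 : (0:ℝ) ≤ p1 := div_nonneg (by linarith) hq0.le
  have hp3 : (0:ℝ) ≤ p3 := div_nonneg (by linarith) hq0.le
  have hrp1 : r * p1 = 1 / 2 := by
    rw [hrdef, hp1def, div_mul_div_comm, div_eq_iff (mul_pos h2q2 hq0).ne']; ring
  have hqp1 : q * p1 = q - 1 := by rw [hp1def, ← mul_div_assoc, mul_div_cancel_left₀ _ hq0.ne']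
  have hqp3 : q * p3 = 2 - q := by rw [hp3def, ← mul_div_assoc, mul_div_cancel_left₀ _ hq0.ne']
  -- pointwise factorization
  have key : ∀ u v w : ℝ≥0∞, u * v * w =
      (u ^ r * v ^ q) ^ p1 * ((u ^ r * w ^ q) ^ p1 * (v ^ q * w ^ q) ^ p3) := by
    intro u v w
    rw [ENNReal.mul_rpow_of_nonneg _ _ hp1, ENNReal.mul_rpow_of_nonneg _ _ hp1,
      ENNReal.mul_rpow_of_nonneg _ _ hp3]
    simp only [← ENNReal.rpow_mul, hrp1, hqp1, hqp3]
    have h1 : u ^ (1/2:ℝ) * u ^ (1/2:ℝ) = u := by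
      rw [← ENNReal.rpow_add_of_nonneg _ _ (by norm_num) (by norm_num)]; norm_num
    have h2 : ∀ v : ℝ≥0∞, v ^ (q - 1) * v ^ (2 - q) = v := by
      intro v
      rw [← ENNReal.rpow_add_of_nonneg _ _ (by linarith) (by linarith)]
      norm_num
    calc u * v * w = (u ^ (1/2:ℝ) * u ^ (1/2:ℝ)) * ((v ^ (q-1) * v ^ (2-q)) *
        (w ^ (q-1) * w ^ (2-q))) := by rw [h1, h2, h2]; ring
      _ = u ^ (1/2:ℝ) * v ^ (q-1) * (u ^ (1/2:ℝ) * w ^ (q-1) * (v ^ (2-q) * w ^ (2-q))) := by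
        ring
  have hsub : Measurable fun p : ℝ × ℝ => p.1 - p.2 := measurable_fst.sub measurable_snd
  have hmphi : Measurable fun p : ℝ × ℝ => φ (p.1 - p.2) := hφ.comp hsub
  have hma : Measurable fun p : ℝ × ℝ => α p.2 := hα.comp measurable_snd
  have hmb : Measurable fun p : ℝ × ℝ => β p.1 := hβ.comp measurable_fst
  have hm0 : Measurable fun p : ℝ × ℝ => φ (p.1 - p.2) * α p.2 * β p.1 :=
    (hmphi.mul hma).mul hmb
  -- step 1 : rewrite LHS as a product-measure integral
  have step1 : ∫⁻ x, (∫⁻ y, φ (x - y) * α y) * β x =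
      ∫⁻ p : ℝ × ℝ, φ (p.1 - p.2) * α p.2 * β p.1 ∂(volume.prod volume) := by
    rw [lintegral_prod _ hm0.aemeasurable]
    refine lintegral_congr fun x => ?_
    have hmx : Measurable fun y : ℝ => φ (x - y) * α y :=
      (hφ.comp (measurable_const.sub measurable_id)).mul hα
    show (∫⁻ y, φ (x - y) * α y) * β x = ∫⁻ y, φ (x - y) * α y * β x
    rw [lintegral_mul_const _ hmx]
  -- the three Hölder factors
  set F1 : ℝ × ℝ → ℝ≥0∞ := fun p => φ (p.1 - p.2) ^ r * α p.2 ^ q with hF1def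
  set F2 : ℝ × ℝ → ℝ≥0∞ := fun p => φ (p.1 - p.2) ^ r * β p.1 ^ q with hF2def
  set F3 : ℝ × ℝ → ℝ≥0∞ := fun p => α p.2 ^ q * β p.1 ^ q with hF3def
  have hmF1 : Measurable F1 := (hmphi.pow_const r).mul (hma.pow_const q)
  have hmF2 : Measurable F2 := (hmphi.pow_const r).mul (hmb.pow_const q)
  have hmF3 : Measurable F3 := (hma.pow_const q).mul (hmb.pow_const q)
  have holder : ∫⁻ p : ℝ × ℝ, φ (p.1 - p.2) * α p.2 * β p.1 ∂(volume.prod volume) ≤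
      (∫⁻ p, F1 p ∂(volume.prod volume)) ^ p1 * ((∫⁻ p, F2 p ∂(volume.prod volume)) ^ p1 *
        (∫⁻ p, F3 p ∂(volume.prod volume)) ^ p3) := by
    have hsum : p1 + p1 + p3 = 1 := by
      rw [hp1def, hp3def]; field_simp; ring
    have H := ENNReal.lintegral_prod_norm_pow_le (μ := volume.prod volume)
      (Finset.univ : Finset (Fin 3)) (f := ![F1, F2, F3]) (p := ![p1, p1, p3])
      (by intro i _; fin_cases i <;>
        [exact hmF1.aemeasurable; exact hmF2.aemeasurable; exact hmF3.aemeasurable])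
      (by simpa [Fin.sum_univ_three] using hsum)
      (by intro i _; fin_cases i <;> [exact hp1; exact hp1; exact hp3])
    simp only [Fin.prod_univ_three, Matrix.cons_val_zero, Matrix.cons_val_one,
      Matrix.head_cons, Matrix.cons_val_two, Matrix.tail_cons] at H
    calc ∫⁻ p : ℝ × ℝ, φ (p.1 - p.2) * α p.2 * β p.1 ∂(volume.prod volume)
        = ∫⁻ p : ℝ × ℝ, F1 p ^ p1 * (F2 p ^ p1 * F3 p ^ p3) ∂(volume.prod volume) :=
          lintegral_congr fun p => key _ _ _
      _ ≤ (∫⁻ p, F1 p ∂(volume.prod volume)) ^ p1 * ((∫⁻ p, F2 p ∂(volume.prod volume)) ^ p1 *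
          (∫⁻ p, F3 p ∂(volume.prod volume)) ^ p3) := by
          simpa [mul_assoc] using H
  -- compute the three integrals
  have hXmeas : Measurable fun x : ℝ => φ x ^ r := hφ.pow_const r
  have htrans1 : ∀ y : ℝ, ∫⁻ x, φ (x - y) ^ r = ∫⁻ x, φ x ^ r := fun y =>
    (measurePreserving_sub_right volume y).lintegral_comp hXmeas
  have htrans2 : ∀ x : ℝ, ∫⁻ y, φ (x - y) ^ r = ∫⁻ x, φ x ^ r := by
    intro x
    have hmp : MeasurePreserving (fun t : ℝ => x - t) volume volume := by
      have := (measurePreserving_add_left (volume : Measure ℝ) x).comp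
        (Measure.measurePreserving_neg (volume : Measure ℝ))
      convert this using 1; funext t; simp [sub_eq_add_neg]
    exact hmp.lintegral_comp hXmeas
  have hI1 : ∫⁻ p, F1 p ∂(volume.prod volume) = (∫⁻ x, φ x ^ r) * ∫⁻ x, α x ^ q := by
    rw [lintegral_prod_symm _ hmF1.aemeasurable]
    calc ∫⁻ y, ∫⁻ x, φ (x - y) ^ r * α y ^ q
        = ∫⁻ y, (∫⁻ x, φ x ^ r) * α y ^ q := by
          refine lintegral_congr fun y => ?_
          have hmx : Measurable fun x : ℝ => φ (x - y) ^ r :=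
            (hφ.comp (measurable_id.sub measurable_const)).pow_const r
          rw [lintegral_mul_const _ hmx, htrans1]
      _ = (∫⁻ x, φ x ^ r) * ∫⁻ x, α x ^ q := lintegral_const_mul _ (hα.pow_const q)
  have hI2 : ∫⁻ p, F2 p ∂(volume.prod volume) = (∫⁻ x, φ x ^ r) * ∫⁻ x, β x ^ q := by
    rw [lintegral_prod _ hmF2.aemeasurable]
    calc ∫⁻ x, ∫⁻ y, φ (x - y) ^ r * β x ^ q
        = ∫⁻ x, (∫⁻ x, φ x ^ r) * β x ^ q := by
          refine lintegral_congr fun x => ?_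
          have hmx : Measurable fun y : ℝ => φ (x - y) ^ r :=
            (hφ.comp (measurable_const.sub measurable_id)).pow_const r
          rw [lintegral_mul_const _ hmx, htrans2]
      _ = (∫⁻ x, φ x ^ r) * ∫⁻ x, β x ^ q := lintegral_const_mul _ (hβ.pow_const q)
  have hI3 : ∫⁻ p, F3 p ∂(volume.prod volume) = (∫⁻ x, α x ^ q) * ∫⁻ x, β x ^ q := by
    rw [lintegral_prod _ hmF3.aemeasurable]
    calc ∫⁻ x, ∫⁻ y, α y ^ q * β x ^ q
        = ∫⁻ x, (∫⁻ y, α y ^ q) * β x ^ q := by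
          refine lintegral_congr fun x => ?_
          rw [lintegral_mul_const _ (hα.pow_const q)]
      _ = (∫⁻ x, α x ^ q) * ∫⁻ x, β x ^ q := lintegral_const_mul _ (hβ.pow_const q)
  rw [step1]
  refine holder.trans (le_of_eq ?_)
  rw [hI1, hI2, hI3]
  rw [ENNReal.mul_rpow_of_nonneg _ _ hp1, ENNReal.mul_rpow_of_nonneg _ _ hp1,
    ENNReal.mul_rpow_of_nonneg _ _ hp3]
  have merge : ∀ x : ℝ≥0∞, ∀ s t : ℝ, 0 ≤ s → 0 ≤ t → x ^ s * x ^ t = x ^ (s + t) :=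
    fun x s t hs ht => (ENNReal.rpow_add_of_nonneg _ _ hs ht).symm
  have e1 : p1 + p1 = (2 * q - 2) / q := by rw [hp1def]; ring
  have e2 : p1 + p3 = 1 / q := by rw [hp1def, hp3def]; field_simp; norm_num
  calc (∫⁻ x, φ x ^ r) ^ p1 * (∫⁻ x, α x ^ q) ^ p1 *
        ((∫⁻ x, φ x ^ r) ^ p1 * (∫⁻ x, β x ^ q) ^ p1 *
          ((∫⁻ x, α x ^ q) ^ p3 * (∫⁻ x, β x ^ q) ^ p3))
      = ((∫⁻ x, φ x ^ r) ^ p1 * (∫⁻ x, φ x ^ r) ^ p1) *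
        (((∫⁻ x, α x ^ q) ^ p1 * (∫⁻ x, α x ^ q) ^ p3) *
          ((∫⁻ x, β x ^ q) ^ p1 * (∫⁻ x, β x ^ q) ^ p3)) := by ring
    _ = (∫⁻ x, φ x ^ r) ^ ((2 * q - 2) / q) * ((∫⁻ x, α x ^ q) ^ (1 / q) *
          (∫⁻ x, β x ^ q) ^ (1 / q)) := by
        rw [merge _ _ _ hp1 hp1, merge _ _ _ hp1 hp3, merge _ _ _ hp1 hp3, e1, e2]
    _ = (∫⁻ x, φ x ^ r) ^ ((2 * q - 2) / q) * (∫⁻ x, α x ^ q) ^ (1 / q) *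
          (∫⁻ x, β x ^ q) ^ (1 / q) := by ring


lemma lint_partition (f : ℝ → ℝ≥0∞) :
    ∫⁻ x, f x = ∑' n : ℤ, ∫⁻ x in Ico (n : ℝ) (n + 1), f x := by
  have hd : Pairwise (Function.onFun Disjoint fun n : ℤ => Ico (n : ℝ) (n + 1)) := by
    intro m n hmn
    rcases lt_or_gt_of_ne hmn with h | h
    · have h1 : (m : ℝ) + 1 ≤ n := by exact_mod_cast Int.add_one_le_iff.mpr h
      refine Set.Ico_disjoint_Ico.mpr ?_
      exact le_trans (min_le_left _ _) (h1.trans (le_max_right _ _))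
    · have h1 : (n : ℝ) + 1 ≤ m := by exact_mod_cast Int.add_one_le_iff.mpr h
      refine Set.Ico_disjoint_Ico.mpr ?_
      exact le_trans (min_le_right _ _) (h1.trans (le_max_left _ _))
  conv_lhs => rw [← setLIntegral_univ (μ := volume) f, ← iUnion_Ico_intCast (α := ℝ)]
  exact lintegral_iUnion (fun n => measurableSet_Ico) hd f

lemma tsum_holder {a b : ℤ → ℝ≥0∞} {q : ℝ} (hq1 : 1 < q) :
    ∑' n, a n * b n ≤ (∑' n, a n ^ (q / (q - 1))) ^ ((q - 1) / q) * (∑' n, b n ^ q) ^ (1 / q) := by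
  have hq0 : (0:ℝ) < q := by linarith
  have hpq : (q / (q - 1)).HolderConjugate q :=
    ((Real.holderConjugate_iff_eq_conjExponent hq1).2 rfl).symm
  have H := ENNReal.lintegral_mul_le_Lp_mul_Lq (Measure.count : Measure ℤ) hpq
    (measurable_of_countable a).aemeasurable (measurable_of_countable b).aemeasurable
  simpa [lintegral_count, one_div, div_div_eq_mul_div, one_mul] using H

theorem stmt14 (q : ℝ) (hq : q ∈ Set.Ioo (1 : ℝ) 2) (K : ℝ → ℝ)
    (hKmem : MemLp K (ENNReal.ofReal (q / (2 * q - 2))) volume)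
    (hKsupp : Function.support K ⊆ Set.Ioo (-1 : ℝ) 1) :
    ∃ C : ℝ, ∀ ε : ℝ, 0 < ε → ∀ z : ℕ → ℝ → ℝ,
      (∀ k, MemLp (z k) (ENNReal.ofReal q) volume) →
      (∀ k, eLpNorm (z k) (ENNReal.ofReal q) volume = 1) →
      (∀ k, ∀ y : ℝ, (∫ x in Set.Ioo (y - 10) (y + 10), |z k x| ^ q) < ε ^ q) →
      ∀ k, (∫ x, (∫ y, K (x - y) * z k y) * z k x) ≤ C * ε ^ (2 - q) := by
  obtain ⟨hq1, hq2⟩ := hq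
  have hq0 : (0:ℝ) < q := by linarith
  have h2q2 : (0:ℝ) < 2 * q - 2 := by linarith
  have hr0 : (0:ℝ) < q / (2 * q - 2) := div_pos hq0 h2q2
  set r : ℝ := q / (2 * q - 2) with hrdef
  set NK : ℝ≥0∞ := eLpNorm K (ENNReal.ofReal r) volume with hNKdef
  have hNKfin : NK ≠ ⊤ := hKmem.2.ne
  refine ⟨NK.toReal * 3 ^ ((q - 1) / q), ?_⟩
  intro ε hε z hz hnorm hsmall k
  -- measurable representatives
  set K' : ℝ → ℝ := (Set.Ioo (-1:ℝ) 1).indicator (hKmem.1.mk K) with hK'def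
  have hK'meas : Measurable K' :=
    (hKmem.1.stronglyMeasurable_mk.measurable).indicator measurableSet_Ioo
  have hKK' : K =ᵐ[volume] K' := by
    filter_upwards [hKmem.1.ae_eq_mk] with x hx
    by_cases hmem : x ∈ Set.Ioo (-1:ℝ) 1
    · rw [hK'def, Set.indicator_of_mem hmem, ← hx]
    · rw [hK'def, Set.indicator_of_notMem hmem]
      by_contra hne
      exact hmem (hKsupp hne)
  have hK'supp : ∀ u : ℝ, u ∉ Set.Ioo (-1:ℝ) 1 → K' u = 0 := fun u hu =>
    Set.indicator_of_notMem hu _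
  set w : ℝ → ℝ := (hz k).1.mk (z k) with hwdef
  have hwmeas : Measurable w := (hz k).1.stronglyMeasurable_mk.measurable
  have hzw : z k =ᵐ[volume] w := (hz k).1.ae_eq_mk
  set φ : ℝ → ℝ≥0∞ := fun u => (‖K' u‖₊ : ℝ≥0∞) with hφdef
  set ζ : ℝ → ℝ≥0∞ := fun u => (‖w u‖₊ : ℝ≥0∞) with hζdef
  have hφm : Measurable φ := hK'meas.enorm
  have hζm : Measurable ζ := hwmeas.enorm
  -- total L^q mass of ζ
  have hofq : (ENNReal.ofReal q) ≠ 0 := by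
    simp only [ne_eq, ENNReal.ofReal_eq_zero, not_le]; linarith
  have hζq : ∫⁻ u, ζ u ^ q = 1 := by
    have h1 : eLpNorm (z k) (ENNReal.ofReal q) volume =
        (∫⁻ u, (‖z k u‖₊ : ℝ≥0∞) ^ q) ^ (1/q) := by
      rw [eLpNorm_eq_lintegral_rpow_enorm_toReal hofq ENNReal.ofReal_ne_top,
        ENNReal.toReal_ofReal hq0.le]
      simp only [enorm_eq_nnnorm]
    have h2 : ∫⁻ u, (‖z k u‖₊ : ℝ≥0∞) ^ q = ∫⁻ u, ζ u ^ q := by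
      refine lintegral_congr_ae ?_
      filter_upwards [hzw] with x hx
      rw [hζdef]; simp only [hx]
    have h3 := hnorm k
    rw [h1, h2] at h3
    have h4 := congrArg (fun t : ℝ≥0∞ => t ^ q) h3
    simp only [← ENNReal.rpow_mul, one_div, inv_mul_cancel₀ (ne_of_gt hq0),
      ENNReal.rpow_one, ENNReal.one_rpow] at h4
    exact h4
  -- pointwise identification of ζ^q with ofReal
  have hpt : ∀ u : ℝ, z k u = w u → (ζ u) ^ q = ENNReal.ofReal (|z k u| ^ q) := by
    intro u hu
    have h5 : ζ u = ENNReal.ofReal |w u| := by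
      rw [hζdef]; show (‖w u‖₊ : ℝ≥0∞) = _; rw [← enorm_eq_nnnorm, Real.enorm_eq_ofReal_abs]
    rw [h5, ENNReal.ofReal_rpow_of_nonneg (abs_nonneg _) hq0.le, hu]
  -- the localized smallness
  set b : ℤ → ℝ≥0∞ := fun n => ∫⁻ u in Ioo ((n:ℝ) - 1) ((n:ℝ) + 2), ζ u ^ q with hbdef
  set a : ℤ → ℝ≥0∞ := fun n => ∫⁻ u in Ico (n:ℝ) ((n:ℝ) + 1), ζ u ^ q with hadef
  have hasum : ∑' n : ℤ, a n = 1 := by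
    rw [hadef, ← lint_partition (fun u => ζ u ^ q)]; exact hζq
  have hint0 : Integrable (fun u => |z k u| ^ q) volume := by
    have h6 := (hz k).integrable_norm_rpow hofq ENNReal.ofReal_ne_top
    simpa [ENNReal.toReal_ofReal hq0.le, Real.norm_eq_abs] using h6
  have hsmallb : ∀ n : ℤ, b n ≤ ENNReal.ofReal (ε ^ q) := by
    intro n
    have hsub : Ioo ((n:ℝ) - 1) ((n:ℝ) + 2) ⊆
        Ioo (((n:ℝ) + 1) - 10) (((n:ℝ) + 1) + 10) := by
      apply Ioo_subset_Ioo <;> linarith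
    refine le_trans (lintegral_mono_set hsub) ?_
    have heq : ∫⁻ u in Ioo (((n:ℝ) + 1) - 10) (((n:ℝ) + 1) + 10), ζ u ^ q =
        ENNReal.ofReal (∫ u in Ioo (((n:ℝ) + 1) - 10) (((n:ℝ) + 1) + 10), |z k u| ^ q) := by
      rw [ofReal_integral_eq_lintegral_ofReal hint0.restrict
        (Filter.Eventually.of_forall fun u => by positivity)]
      refine lintegral_congr_ae ?_
      filter_upwards [ae_restrict_of_ae hzw] with u hu
      exact hpt u hu
    rw [heq]
    exact ENNReal.ofReal_le_ofReal (le_of_lt (hsmall k ((n:ℝ) + 1)))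
  -- sum of b is at most 3
  have hcover : ∀ n : ℤ, b n ≤ a (n - 1) + a n + a (n + 1) := by
    intro n
    have hsub : Ioo ((n:ℝ) - 1) ((n:ℝ) + 2) ⊆ (Ico ((n:ℝ) - 1) ((n:ℝ) - 1 + 1)) ∪
        ((Ico ((n:ℝ)) ((n:ℝ) + 1)) ∪ (Ico ((n:ℝ) + 1) ((n:ℝ) + 1 + 1))) := by
      intro u hu
      simp only [Set.mem_Ioo, Set.mem_union, Set.mem_Ico] at hu ⊢
      rcases lt_or_ge u (n:ℝ) with h | h
      · exact Or.inl ⟨by linarith [hu.1], by linarith⟩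
      · rcases lt_or_ge u ((n:ℝ) + 1) with h2 | h2
        · exact Or.inr (Or.inl ⟨h, h2⟩)
        · exact Or.inr (Or.inr ⟨h2, by linarith [hu.2]⟩)
    calc b n ≤ ∫⁻ u in (Ico ((n:ℝ) - 1) ((n:ℝ) - 1 + 1)) ∪
        ((Ico ((n:ℝ)) ((n:ℝ) + 1)) ∪ (Ico ((n:ℝ) + 1) ((n:ℝ) + 1 + 1))), ζ u ^ q :=
          lintegral_mono_set hsub
      _ ≤ (∫⁻ u in Ico ((n:ℝ) - 1) ((n:ℝ) - 1 + 1), ζ u ^ q) +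
          ((∫⁻ u in Ico ((n:ℝ)) ((n:ℝ) + 1), ζ u ^ q) +
            (∫⁻ u in Ico ((n:ℝ) + 1) ((n:ℝ) + 1 + 1), ζ u ^ q)) :=
          le_trans (lintegral_union_le _ _ _) (add_le_add le_rfl (lintegral_union_le _ _ _))
      _ = a (n - 1) + a n + a (n + 1) := by
          simp only [hadef]; push_cast; rw [← add_assoc]
  have hbsum : ∑' n : ℤ, b n ≤ 3 := by
    have h7 : ∑' n : ℤ, b n ≤ ∑' n : ℤ, (a (n - 1) + a n + a (n + 1)) :=
      ENNReal.tsum_le_tsum hcover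
    have h8 : ∑' n : ℤ, (a (n - 1) + a n + a (n + 1)) =
        (∑' n : ℤ, a (n - 1)) + (∑' n : ℤ, a n) + (∑' n : ℤ, a (n + 1)) := by
      rw [ENNReal.tsum_add, ENNReal.tsum_add]
    have h9 : ∑' n : ℤ, a (n - 1) = ∑' n : ℤ, a n := (Equiv.subRight (1:ℤ)).tsum_eq a
    have h10 : ∑' n : ℤ, a (n + 1) = ∑' n : ℤ, a n := (Equiv.addRight (1:ℤ)).tsum_eq a
    rw [h8, h9, h10, hasum] at h7
    refine h7.trans (le_of_eq ?_)
    norm_num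
  -- the L^r norm of φ
  have hofr : (ENNReal.ofReal r) ≠ 0 := by
    simp only [ne_eq, ENNReal.ofReal_eq_zero, not_le]; linarith
  have hφr : ∫⁻ u, φ u ^ r = NK ^ r := by
    have h1 : eLpNorm K (ENNReal.ofReal r) volume =
        (∫⁻ u, (‖K u‖₊ : ℝ≥0∞) ^ r) ^ (1/r) := by
      rw [eLpNorm_eq_lintegral_rpow_enorm_toReal hofr ENNReal.ofReal_ne_top,
        ENNReal.toReal_ofReal hr0.le]
      simp only [enorm_eq_nnnorm]
    have h2 : ∫⁻ u, (‖K u‖₊ : ℝ≥0∞) ^ r = ∫⁻ u, φ u ^ r := by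
      refine lintegral_congr_ae ?_
      filter_upwards [hKK'] with x hx
      rw [hφdef]; simp only [hx]
    rw [hNKdef, h1, h2, ← ENNReal.rpow_mul, one_div, inv_mul_cancel₀ (ne_of_gt hr0),
      ENNReal.rpow_one]
  -- per-interval trilinear bound
  have hTn : ∀ n : ℤ, (∫⁻ x in Ico (n:ℝ) ((n:ℝ) + 1), (∫⁻ y, φ (x - y) * ζ y) * ζ x)
      ≤ NK * (b n ^ (1/q) * a n ^ (1/q)) := by
    intro n
    set α : ℝ → ℝ≥0∞ := (Ioo ((n:ℝ) - 1) ((n:ℝ) + 2)).indicator ζ with hαdef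
    set β : ℝ → ℝ≥0∞ := (Ico (n:ℝ) ((n:ℝ) + 1)).indicator ζ with hβdef
    have hαm : Measurable α := hζm.indicator measurableSet_Ioo
    have hβm : Measurable β := hζm.indicator measurableSet_Ico
    have step : (∫⁻ x in Ico (n:ℝ) ((n:ℝ) + 1), (∫⁻ y, φ (x - y) * ζ y) * ζ x)
        = ∫⁻ x, (∫⁻ y, φ (x - y) * α y) * β x := by
      rw [← lintegral_indicator measurableSet_Ico]
      refine lintegral_congr fun x => ?_
      by_cases hx : x ∈ Ico (n:ℝ) ((n:ℝ) + 1)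
      · rw [Set.indicator_of_mem hx, hβdef, Set.indicator_of_mem hx]
        congr 1
        refine lintegral_congr fun y => ?_
        by_cases hy : y ∈ Ioo ((n:ℝ) - 1) ((n:ℝ) + 2)
        · rw [hαdef, Set.indicator_of_mem hy]
        · rw [hαdef, Set.indicator_of_notMem hy]
          have hz0 : φ (x - y) = 0 := by
            have hK0 : K' (x - y) = 0 := by
              apply hK'supp
              simp only [Set.mem_Ioo, not_and_or, not_lt] at hy ⊢
              obtain ⟨hx1, hx2⟩ := hx
              rcases hy with hy | hy
              · right; linarith
              · left; linarith
            rw [hφdef]; simp [hK0]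
          rw [hz0]; simp
      · rw [Set.indicator_of_notMem hx, hβdef, Set.indicator_of_notMem hx, mul_zero]
    rw [step]
    refine (young_tri hφm hαm hβm hq1 hq2).trans ?_
    have hαint : ∫⁻ u, α u ^ q = b n := by
      have hbn' : b n = ∫⁻ u in Ioo ((n:ℝ) - 1) ((n:ℝ) + 2), ζ u ^ q := rfl
      rw [hbn', ← lintegral_indicator measurableSet_Ioo]
      refine lintegral_congr fun u => ?_
      by_cases hu : u ∈ Ioo ((n:ℝ) - 1) ((n:ℝ) + 2)
      · rw [hαdef, Set.indicator_of_mem hu, Set.indicator_of_mem hu]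
      · rw [hαdef, Set.indicator_of_notMem hu, Set.indicator_of_notMem hu,
          ENNReal.zero_rpow_of_pos hq0]
    have hβint : ∫⁻ u, β u ^ q = a n := by
      have han' : a n = ∫⁻ u in Ico (n:ℝ) ((n:ℝ) + 1), ζ u ^ q := rfl
      rw [han', ← lintegral_indicator measurableSet_Ico]
      refine lintegral_congr fun u => ?_
      by_cases hu : u ∈ Ico (n:ℝ) ((n:ℝ) + 1)
      · rw [hβdef, Set.indicator_of_mem hu, Set.indicator_of_mem hu]
      · rw [hβdef, Set.indicator_of_notMem hu, Set.indicator_of_notMem hu,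
          ENNReal.zero_rpow_of_pos hq0]
    rw [hαint, hβint, hφr, ← ENNReal.rpow_mul]
    have hrq : r * ((2 * q - 2) / q) = 1 := by
      rw [hrdef]; field_simp
    rw [hrq, ENNReal.rpow_one, mul_assoc]
  -- summing up
  have hmain : (∫⁻ x, (∫⁻ y, φ (x - y) * ζ y) * ζ x)
      ≤ NK * ENNReal.ofReal (ε ^ (2 - q)) * 3 ^ ((q - 1) / q) := by
    rw [lint_partition]
    have hq2q : (0:ℝ) ≤ (2 - q) / q := div_nonneg (by linarith) hq0.le
    have hq1q : (0:ℝ) ≤ (q - 1) / q := div_nonneg (by linarith) hq0.le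
    calc ∑' n : ℤ, (∫⁻ x in Ico (n:ℝ) ((n:ℝ) + 1), (∫⁻ y, φ (x - y) * ζ y) * ζ x)
        ≤ ∑' n : ℤ, NK * (b n ^ (1/q) * a n ^ (1/q)) := ENNReal.tsum_le_tsum hTn
      _ = NK * ∑' n : ℤ, b n ^ (1/q) * a n ^ (1/q) := ENNReal.tsum_mul_left
      _ ≤ NK * ∑' n : ℤ, ENNReal.ofReal (ε ^ q) ^ ((2 - q) / q) *
            (b n ^ ((q - 1) / q) * a n ^ (1/q)) := by
          refine mul_le_mul_right (ENNReal.tsum_le_tsum fun n => ?_) _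
          have hsplit : b n ^ (1/q) = b n ^ ((2 - q) / q) * b n ^ ((q - 1) / q) := by
            rw [← ENNReal.rpow_add_of_nonneg _ _ hq2q hq1q]
            congr 1
            field_simp
            norm_num
          rw [hsplit, mul_assoc]
          exact mul_le_mul_left (ENNReal.rpow_le_rpow (hsmallb n) hq2q) _
      _ = NK * (ENNReal.ofReal (ε ^ q) ^ ((2 - q) / q) *
            ∑' n : ℤ, b n ^ ((q - 1) / q) * a n ^ (1/q)) := by
          rw [ENNReal.tsum_mul_left]
      _ ≤ NK * (ENNReal.ofReal (ε ^ q) ^ ((2 - q) / q) *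
            ((∑' n : ℤ, (b n ^ ((q - 1) / q)) ^ (q / (q - 1))) ^ ((q - 1) / q) *
              (∑' n : ℤ, (a n ^ (1/q)) ^ q) ^ (1/q))) := by
          exact mul_le_mul_right (mul_le_mul_right (tsum_holder hq1) _) _
      _ = NK * (ENNReal.ofReal (ε ^ q) ^ ((2 - q) / q) *
            ((∑' n : ℤ, b n) ^ ((q - 1) / q) * (∑' n : ℤ, a n) ^ (1/q))) := by
          have hbn : ∀ n : ℤ, (b n ^ ((q - 1) / q)) ^ (q / (q - 1)) = b n := by
            intro n
            rw [← ENNReal.rpow_mul]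
            have he : (q - 1) / q * (q / (q - 1)) = 1 := by
              field_simp
            rw [he, ENNReal.rpow_one]
          have han : ∀ n : ℤ, (a n ^ (1/q)) ^ q = a n := by
            intro n
            rw [← ENNReal.rpow_mul, one_div, inv_mul_cancel₀ (ne_of_gt hq0),
              ENNReal.rpow_one]
          rw [tsum_congr hbn, tsum_congr han]
      _ ≤ NK * (ENNReal.ofReal (ε ^ q) ^ ((2 - q) / q) * ((3:ℝ≥0∞) ^ ((q - 1) / q) * 1)) := by
          refine mul_le_mul_right (mul_le_mul_right ?_ _) _
          rw [hasum, ENNReal.one_rpow]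
          exact mul_le_mul_left (ENNReal.rpow_le_rpow hbsum hq1q) _
      _ = NK * ENNReal.ofReal (ε ^ (2 - q)) * 3 ^ ((q - 1) / q) := by
          have hE : ENNReal.ofReal (ε ^ q) ^ ((2 - q) / q) = ENNReal.ofReal (ε ^ (2 - q)) := by
            rw [ENNReal.ofReal_rpow_of_nonneg (by positivity) hq2q]
            congr 1
            rw [← Real.rpow_mul hε.le]
            congr 1
            field_simp
          rw [hE]; try ring
  -- conclusion: pass from the Bochner integral to the lintegral
  have hC0 : (0:ℝ) ≤ NK.toReal * 3 ^ ((q - 1) / q) * ε ^ (2 - q) := by positivity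
  have hfinal : (∫⁻ x, (∫⁻ y, φ (x - y) * ζ y) * ζ x)
      ≤ ENNReal.ofReal (NK.toReal * 3 ^ ((q - 1) / q) * ε ^ (2 - q)) := by
    have h3 : (3:ℝ≥0∞) ^ ((q - 1) / q) = ENNReal.ofReal (3 ^ ((q - 1) / q)) := by
      rw [← ENNReal.ofReal_rpow_of_nonneg (by norm_num) (div_nonneg (by linarith) hq0.le)]
      norm_num
    have heq : ENNReal.ofReal (NK.toReal * 3 ^ ((q - 1) / q) * ε ^ (2 - q)) =
        NK * ENNReal.ofReal (ε ^ (2 - q)) * 3 ^ ((q - 1) / q) := by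
      rw [show NK.toReal * 3 ^ ((q - 1) / q) * ε ^ (2 - q) =
          NK.toReal * (ε ^ (2 - q) * 3 ^ ((q - 1) / q)) from by ring,
        ENNReal.ofReal_mul ENNReal.toReal_nonneg, ENNReal.ofReal_mul (by positivity),
        ENNReal.ofReal_toReal hNKfin, h3, ← mul_assoc]
    exact hmain.trans (le_of_eq heq.symm)
  -- the chain of inequalities for the Bochner integral
  have hinner : ∀ x : ℝ, (∫⁻ y, ((‖K (x - y)‖₊ : ℝ≥0∞) * ‖z k y‖₊)) = ∫⁻ y, φ (x - y) * ζ y := by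
    intro x
    refine lintegral_congr_ae ?_
    have hmp : MeasurePreserving (fun t : ℝ => x - t) volume volume := by
      have := (measurePreserving_add_left (volume : Measure ℝ) x).comp
        (Measure.measurePreserving_neg (volume : Measure ℝ))
      convert this using 1; funext t; simp [sub_eq_add_neg]
    have hKcomp : (fun y : ℝ => K (x - y)) =ᵐ[volume] fun y : ℝ => K' (x - y) :=
      hmp.quasiMeasurePreserving.ae_eq hKK'
    filter_upwards [hKcomp, hzw] with y h1 h2
    rw [hφdef, hζdef]; simp only [h1, h2]
  calc (∫ x, (∫ y, K (x - y) * z k y) * z k x)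
      ≤ |∫ x, (∫ y, K (x - y) * z k y) * z k x| := le_abs_self _
    _ = ((‖∫ x, (∫ y, K (x - y) * z k y) * z k x‖₊ : ℝ≥0∞)).toReal := by
        simp [Real.norm_eq_abs]
    _ ≤ (ENNReal.ofReal (NK.toReal * 3 ^ ((q - 1) / q) * ε ^ (2 - q))).toReal := by
        refine ENNReal.toReal_mono ENNReal.ofReal_ne_top ?_
        refine le_trans (enorm_integral_le_lintegral_enorm _) (le_trans ?_ hfinal)
        refine lintegral_mono_ae ?_
        filter_upwards [hzw] with x hx
        rw [enorm_mul]
        have hx2 : ‖z k x‖ₑ = ζ x := by rw [hζdef]; show ‖z k x‖ₑ = (‖w x‖₊ : ℝ≥0∞); rw [hx, enorm_eq_nnnorm]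
        rw [hx2]
        refine mul_le_mul_left ?_ _
        refine le_trans (enorm_integral_le_lintegral_enorm _) ?_
        rw [← hinner x]
        refine lintegral_mono fun y => ?_
        exact (enorm_mul _ _).le
    _ = NK.toReal * 3 ^ ((q - 1) / q) * ε ^ (2 - q) := ENNReal.toReal_ofReal hC0
end

section
/- Let n ≥ 1 be an integer, μ = 2nπ, A ≥ √2, and K(x) = (A²−1)Λ(x) − (sin(μx)/μ)sgn(x)χ_{(−1,1)}(x). Then K is even, continuous on ℝ, supported in [−1,1], strictly positive on (−1,1), nonincreasing on [0,∞), and satisfies K(0) = A² − 1 and K(±1) = 0. -/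
open Real Set

theorem stmt19 (n : ℕ) (hn : 1 ≤ n) (μ A : ℝ) (hμ : μ = 2 * n * Real.pi)
    (hA : Real.sqrt 2 ≤ A) (K : ℝ → ℝ)
    (hK : ∀ x, K x = (A ^ 2 - 1) * max (1 - |x|) 0 -
      (Real.sin (μ * x) / μ) * Real.sign x * Set.indicator (Set.Ioo (-1 : ℝ) 1) (fun _ => (1 : ℝ)) x) :
    (∀ x, K (-x) = K x) ∧ Continuous K ∧
    (∀ x : ℝ, 1 ≤ |x| → K x = 0) ∧
    (∀ x ∈ Set.Ioo (-1 : ℝ) 1, 0 < K x) ∧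
    AntitoneOn K (Set.Ici 0) ∧
    K 0 = A ^ 2 - 1 ∧ K 1 = 0 ∧ K (-1) = 0 := by
  have hπ := Real.pi_pos
  have hn1 : (1:ℝ) ≤ n := by exact_mod_cast hn
  have hμpos : 0 < μ := by rw [hμ]; nlinarith
  have hsinμ : Real.sin μ = 0 := by
    rw [hμ, show 2 * (n:ℝ) * Real.pi = ((2*n : ℕ):ℝ) * Real.pi by push_cast; ring]
    exact Real.sin_nat_mul_pi _
  have hcosμ : Real.cos μ = 1 := by
    rw [hμ, show 2 * (n:ℝ) * Real.pi = ((n : ℕ):ℝ) * (2 * Real.pi) by push_cast; ring]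
    exact Real.cos_nat_mul_two_pi _
  have hA2 : 2 ≤ A ^ 2 := by
    have h2 : Real.sqrt 2 ^ 2 = 2 := Real.sq_sqrt (by norm_num)
    nlinarith [Real.sqrt_nonneg 2]
  -- closed form
  have hK' : ∀ x, K x = (A ^ 2 - 1) * max (1 - |x|) 0 - Real.sin (μ * min |x| 1) / μ := by
    intro x
    rw [hK x]
    by_cases h : |x| < 1
    · have hx : x ∈ Set.Ioo (-1:ℝ) 1 := by
        rcases abs_lt.mp h with ⟨h1, h2⟩; exact ⟨h1, h2⟩
      rw [Set.indicator_of_mem hx, min_eq_left h.le]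
      rcases lt_trichotomy x 0 with hx0 | hx0 | hx0
      · rw [Real.sign_of_neg hx0, abs_of_neg hx0]
        simp only [mul_neg, Real.sin_neg]; ring
      · subst hx0; simp
      · rw [Real.sign_of_pos hx0, abs_of_pos hx0]; ring
    · push_neg at h
      rw [Set.indicator_of_notMem, min_eq_right h, mul_one, hsinμ]
      · ring
      · intro hx
        exact absurd (abs_lt.mpr ⟨hx.1, hx.2⟩) (not_lt.mpr h)
  -- support
  have hsupp : ∀ x : ℝ, 1 ≤ |x| → K x = 0 := by
    intro x hx
    rw [hK' x, min_eq_right hx, mul_one, hsinμ, max_eq_right (by linarith)]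
    ring
  -- positivity
  have hpos : ∀ x ∈ Set.Ioo (-1:ℝ) 1, 0 < K x := by
    intro x hx
    have habs : |x| < 1 := abs_lt.mpr ⟨hx.1, hx.2⟩
    have habs0 : 0 ≤ |x| := abs_nonneg x
    rw [hK' x, min_eq_left habs.le, max_eq_left (by linarith)]
    set t := |x| with ht
    have hy : 0 < μ * (1 - t) := by nlinarith
    have hsin_eq : Real.sin (μ * t) = - Real.sin (μ * (1 - t)) := by
      have : μ * t = μ - μ * (1 - t) := by ring
      rw [this, Real.sin_sub, hsinμ, hcosμ]; ring
    have hkey : Real.sin (μ * t) < μ * (1 - t) := by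
      rw [hsin_eq]
      rcases lt_or_ge (μ * (1 - t)) Real.pi with hlt | hge
      · have := Real.sin_pos_of_pos_of_lt_pi hy hlt
        linarith
      · have := Real.neg_one_le_sin (μ * (1 - t))
        nlinarith [Real.pi_gt_three]
    rw [sub_pos, div_lt_iff₀ hμpos]
    nlinarith
  -- antitone on [0,1] for the smooth extension
  set g : ℝ → ℝ := fun x => (A ^ 2 - 1) * (1 - x) - Real.sin (μ * x) / μ with hg_def
  have hKg : ∀ x ∈ Set.Icc (0:ℝ) 1, K x = g x := by
    intro x ⟨h0, h1⟩
    rw [hK' x, abs_of_nonneg h0, min_eq_left h1, max_eq_left (by linarith)]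
  have hg1 : g 1 = 0 := by simp [hg_def, hsinμ]
  have hganti : AntitoneOn g (Set.Icc (0:ℝ) 1) := by
    apply antitoneOn_of_deriv_nonpos (convex_Icc 0 1)
    · exact ((continuous_const.mul (continuous_const.sub continuous_id)).sub
        ((Real.continuous_sin.comp (continuous_const.mul continuous_id)).div_const μ)).continuousOn
    · intro x hx
      apply DifferentiableAt.differentiableWithinAt
      exact (((differentiable_const _).mul ((differentiable_const _).sub differentiable_id)) x).sub
        ((((Real.differentiable_sin.comp ((differentiable_const μ).mul differentiable_id))) x).div_const μ)
    · intro x hx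
      have h1 : HasDerivAt (fun x : ℝ => (A ^ 2 - 1) * (1 - x)) (-(A ^ 2 - 1)) x := by
        have := ((hasDerivAt_const x (1:ℝ)).sub (hasDerivAt_id x)).const_mul (A ^ 2 - 1)
        simpa using this
      have h2 : HasDerivAt (fun x : ℝ => Real.sin (μ * x) / μ) (Real.cos (μ * x)) x := by
        have hlin : HasDerivAt (fun x : ℝ => μ * x) μ x := by
          simpa using (hasDerivAt_id x).const_mul μ
        have := ((Real.hasDerivAt_sin (μ * x)).comp x hlin).div_const μ
        simpa [mul_div_assoc, div_self hμpos.ne'] using this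
      have hd : HasDerivAt g (-(A ^ 2 - 1) - Real.cos (μ * x)) x := h1.sub h2
      rw [hd.deriv]
      nlinarith [Real.neg_one_le_cos (μ * x)]
  -- K nonneg on [0,∞)
  have hKnonneg : ∀ a : ℝ, 0 ≤ a → 0 ≤ K a := by
    intro a ha
    rcases le_or_gt a 1 with h1 | h1
    · rw [hKg a ⟨ha, h1⟩]
      have := hganti ⟨ha, h1⟩ (Set.mem_Icc.mpr ⟨zero_le_one, le_refl 1⟩) h1
      rw [hg1] at this; exact this
    · rw [hsupp a (by rw [abs_of_nonneg ha]; linarith)]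
  have hanti : AntitoneOn K (Set.Ici 0) := by
    intro a ha b hb hab
    simp only [Set.mem_Ici] at ha hb
    rcases le_or_gt b 1 with hb1 | hb1
    · rw [hKg a ⟨ha, hab.trans hb1⟩, hKg b ⟨hb, hb1⟩]
      exact hganti ⟨ha, hab.trans hb1⟩ ⟨hb, hb1⟩ hab
    · rw [hsupp b (by rw [abs_of_nonneg hb]; linarith)]
      exact hKnonneg a ha
  refine ⟨?_, ?_, hsupp, hpos, hanti, ?_, ?_, ?_⟩
  · intro x; rw [hK' x, hK' (-x), abs_neg]
  · have : K = fun x => (A ^ 2 - 1) * max (1 - |x|) 0 - Real.sin (μ * min |x| 1) / μ :=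
      funext hK'
    rw [this]
    exact ((continuous_const.mul ((continuous_const.sub continuous_abs).max continuous_const)).sub
      ((Real.continuous_sin.comp (continuous_const.mul (continuous_abs.min continuous_const))).div_const μ))
  · rw [hK' 0]; simp
  · exact hsupp 1 (by norm_num)
  · exact hsupp (-1) (by norm_num)
end
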